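/- For k = 2 with the symmetric ansatz q₁ = −q₂ = q, the reduced system dq/dτ = −2q^⊥/|q|² + 2(q¹/r₀²)e₂ conserves the quantity H(q) = 2log(2|q|) − (q¹)²/r₀²: along any solution with q(τ) ≠ 0, d/dτ [2 log|q(τ)| − (q¹(τ))²/r₀²] = 0. -/

import Mathlib

/-- `q^⊥ = (−q², q¹)`. -/
def perp (p : ℝ × ℝ) : ℝ × ℝ := (-p.2, p.1)

/-- The squared Euclidean norm on `ℝ²`. -/
def enorm2 (p : ℝ × ℝ) : ℝ := p.1 ^ 2 + p.2 ^ 2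

/-!
The rotational term `−2q^⊥/|q|²` is tangent to the circles `|q| = const`, so `|q|²` changes
only through the `e₂`-component: `d/dτ log|q|² = 4q¹q²/(r₀²|q|²)`. The same rotational term
gives `dq¹/dτ = 2q²/|q|²`, hence `d/dτ (q¹)²/r₀²` is the same quantity.
-/

open Real

noncomputable def reducedField (c : ℝ) (p : ℝ × ℝ) : ℝ × ℝ :=
  (-2 / enorm2 p) • perp p + (2 * p.1 / c) • ((0 : ℝ), (1 : ℝ))

section Prod

variable {𝕜 E F : Type*} [NontriviallyNormedField 𝕜] [NormedAddCommGroup E] [NormedSpace 𝕜 E]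
  [NormedAddCommGroup F] [NormedSpace 𝕜 F] {f : 𝕜 → E × F} {f' : E × F} {x : 𝕜}

lemma HasDerivAt.fst (hf : HasDerivAt f f' x) : HasDerivAt (fun t => (f t).1) f'.1 x :=
  (hasFDerivAt_fst (p := f x)).comp_hasDerivAt x hf

lemma HasDerivAt.snd (hf : HasDerivAt f f' x) : HasDerivAt (fun t => (f t).2) f'.2 x :=
  (hasFDerivAt_snd (p := f x)).comp_hasDerivAt x hf

end Prod

lemma enorm2_nonneg (p : ℝ × ℝ) : 0 ≤ enorm2 p := by
  unfold enorm2
  positivity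

lemma enorm2_pos {p : ℝ × ℝ} (hp : p ≠ 0) : 0 < enorm2 p := by
  obtain ⟨x, y⟩ := p
  have hxy : x ≠ 0 ∨ y ≠ 0 := by
    by_contra! h
    exact hp (Prod.ext h.1 h.2)
  unfold enorm2
  rcases hxy with hx | hy
  · have := sq_pos_of_ne_zero hx
    positivity
  · have := sq_pos_of_ne_zero hy
    positivity

lemma two_mul_log_sqrt_enorm2 (p : ℝ × ℝ) : 2 * log (√(enorm2 p)) = log (enorm2 p) := by
  rw [log_sqrt (enorm2_nonneg p)]
  ring

lemma HasDerivAt.enorm2 {q : ℝ → ℝ × ℝ} {q' : ℝ × ℝ} {τ : ℝ} (hq : HasDerivAt q q' τ) :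
    HasDerivAt (fun t => enorm2 (q t)) (2 * (q τ).1 * q'.1 + 2 * (q τ).2 * q'.2) τ := by
  simpa [_root_.enorm2, Pi.add_def, Pi.pow_def] using (hq.fst.pow 2).add (hq.snd.pow 2)

lemma reducedField_fst (c : ℝ) (p : ℝ × ℝ) : (reducedField c p).1 = 2 * p.2 / enorm2 p := by
  simp only [reducedField, perp, Prod.fst_add, Prod.smul_fst, smul_eq_mul]
  ring

lemma reducedField_snd (c : ℝ) (p : ℝ × ℝ) :
    (reducedField c p).2 = -2 * p.1 / enorm2 p + 2 * p.1 / c := by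
  simp only [reducedField, perp, Prod.snd_add, Prod.smul_snd, smul_eq_mul]
  ring

theorem symmetric_pair_conserved_general (r₀ : ℝ) (q : ℝ → ℝ × ℝ)
    (hq : ∀ τ, q τ ≠ 0)
    (hode : ∀ τ, HasDerivAt q
      ((-2 / enorm2 (q τ)) • perp (q τ) + (2 * (q τ).1 / r₀ ^ 2) • ((0 : ℝ), (1 : ℝ))) τ) :
    ∀ τ, HasDerivAt
      (fun t => 2 * Real.log (Real.sqrt (enorm2 (q t))) - (q t).1 ^ 2 / r₀ ^ 2) 0 τ := by
  intro τ
  have hv : HasDerivAt q (reducedField (r₀ ^ 2) (q τ)) τ := hode τ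
  simp only [two_mul_log_sqrt_enorm2]
  have hlog := hv.enorm2.log (enorm2_pos (hq τ)).ne'
  have hsq := (hv.fst.pow 2).div_const (r₀ ^ 2)
  refine (hlog.sub hsq).congr_deriv ?_
  rw [reducedField_fst, reducedField_snd]
  ring

/-- For `k = 2` with the symmetric ansatz `q₁ = −q₂ = q`, the reduced system
`dq/dτ = −2q^⊥/|q|² + 2(q¹/r₀²)e₂` conserves `2log|q| − (q¹)²/r₀²`: along any
solution with `q(τ) ≠ 0`, `d/dτ [2log|q(τ)| − (q¹(τ))²/r₀²] = 0`. -/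
theorem symmetric_pair_conserved (r₀ : ℝ) (hr₀ : 0 < r₀) (q : ℝ → ℝ × ℝ)
    (hq : ∀ τ, q τ ≠ 0)
    (hode : ∀ τ, HasDerivAt q
      ((-2 / enorm2 (q τ)) • perp (q τ) + (2 * (q τ).1 / r₀ ^ 2) • ((0 : ℝ), (1 : ℝ))) τ) :
    ∀ τ, HasDerivAt
      (fun t => 2 * Real.log (Real.sqrt (enorm2 (q t))) - (q t).1 ^ 2 / r₀ ^ 2) 0 τ :=
  symmetric_pair_conserved_general r₀ q hq hode
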